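/- arXiv:2512.20777 — 3 statements merged into one kernel-verified Lean document; each statement's English description precedes it below -/
import Mathlib

section
/- Let h_l(x) = \sum_{k \ge l} b_k x^k be a complex power series with radius of convergence R, and let \tilde{h}_l(x) = \sum_{k \ge l} |b_k| x^k. Let A be an n-by-n complex matrix with spectral radius \rho(A) < R, and let \|\cdot\| be a subordinate (operator) matrix norm on n-by-n complex matrices. Suppose that for every positive integer k there is a real number a_k with \|A^k\| \le a_k. Let p be a positive integer with 1 \le p \le l, let p_0 be the (unique) multiple of p satisfying l \le p_0 \le l + p - 1, and set \alpha_p = max{ a_k^{1/k} : k = p, l, l+1, l+2, \ldots, p_0 - 1, p_0 + 1, p_0 + 2, \ldots, l + p - 1 }. If \alpha_p < R, then \|h_l(A)\| \le \tilde{h}_l(\alpha_p), i.e. \| \sum_{k \ge l} b_k A^k \| \le \sum_{k \ge l} |b_k| \alpha_p^k. -/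
open scoped ENNReal

/-!
`N` is the operator norm of `A` acting on `ℂⁿ` normed by `ν`, so transporting matrices to
continuous operators on that normed space turns `N` into the norm of a normed algebra. In a normed
ring, `‖x ^ k‖ ≤ α ^ k` for all `k ≥ l` follows from the same bound for `k = p` and for the window
`l ≤ k < l + p`, since `x ^ (p + j) = x ^ p * x ^ j`; inside the window, the multiple `p₀` of `p`
is covered by `‖x ^ (p * m)‖ ≤ ‖x ^ p‖ ^ m`. The series is then bounded termwise, its majorant
converging because `α < R`.
-/

/-- `V` under another name, so that a norm can be put on it without clashing with instances
already present on `V`. -/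
def WithNorm (V : Type*) : Type _ := V

namespace WithNorm

variable {𝕜 V : Type*} [AddCommGroup V]

instance : AddCommGroup (WithNorm V) := ‹AddCommGroup V›

instance [Semiring 𝕜] [Module 𝕜 V] : Module 𝕜 (WithNorm V) := ‹Module 𝕜 V›

end WithNorm

universe u v

theorem exists_linearEquiv_norm_eq {𝕜 : Type*} {V : Type u} [NormedField 𝕜] [AddCommGroup V]
    [Module 𝕜 V] (ν : V → ℝ) (hadd : ∀ x y, ν (x + y) ≤ ν x + ν y)
    (hsmul : ∀ (c : 𝕜) x, ν (c • x) = ‖c‖ * ν x) (hzero : ∀ x, ν x = 0 ↔ x = 0) :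
    ∃ (E : Type u) (_ : NormedAddCommGroup E) (_ : NormedSpace 𝕜 E) (e : V ≃ₗ[𝕜] E),
      ∀ x, ‖e x‖ = ν x := by
  have hnonneg (x : V) : 0 ≤ ν x := by
    have h := hadd x (-x)
    rw [add_neg_cancel, (hzero 0).2 rfl, show -x = (-1 : 𝕜) • x by simp, hsmul] at h
    simp only [norm_neg, norm_one, one_mul] at h
    linarith
  let : Norm (WithNorm V) := ⟨ν⟩
  have core : NormedSpace.Core 𝕜 (WithNorm V) :=
    { norm_nonneg := hnonneg
      norm_smul := hsmul
      norm_triangle := hadd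
      norm_eq_zero_iff := hzero }
  let := NormedAddCommGroup.ofCore core
  exact ⟨WithNorm V, _, NormedSpace.ofCore core, LinearEquiv.refl 𝕜 V, fun _ => rfl⟩

theorem map_tsum_of_finiteDimensional {𝕜 E F G ι : Type*} [NontriviallyNormedField 𝕜]
    [CompleteSpace 𝕜] [AddCommGroup E] [Module 𝕜 E] [TopologicalSpace E] [IsTopologicalAddGroup E]
    [ContinuousSMul 𝕜 E] [T2Space E] [FiniteDimensional 𝕜 E] [AddCommGroup F] [Module 𝕜 F]
    [TopologicalSpace F] [IsTopologicalAddGroup F] [ContinuousSMul 𝕜 F] [T2Space F]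
    [EquivLike G E F] [LinearEquivClass G 𝕜 E F] (φ : G) (f : ι → E) :
    φ (∑' i, f i) = ∑' i, φ (f i) :=
  (SemilinearEquivClass.semilinearEquiv φ : E ≃ₗ[𝕜] F).toContinuousLinearEquiv.map_tsum

section MatrixOperator

variable {𝕜 : Type u} {m : Type v} [RCLike 𝕜] [Fintype m] [DecidableEq m]

section

variable {E : Type*} [NormedAddCommGroup E] [NormedSpace 𝕜 E] [FiniteDimensional 𝕜 E]

noncomputable def Matrix.toCLMOfEquiv (e : (m → 𝕜) ≃ₗ[𝕜] E) :
    Matrix m m 𝕜 ≃ₐ[𝕜] (E →L[𝕜] E) :=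
  Matrix.toLinAlgEquiv'.trans ((e.conjAlgEquiv 𝕜).trans (Module.End.toContinuousLinearMap E))

theorem Matrix.toCLMOfEquiv_apply_apply (e : (m → 𝕜) ≃ₗ[𝕜] E) (M : Matrix m m 𝕜)
    (x : m → 𝕜) : toCLMOfEquiv e M (e x) = e (M.mulVec x) := by
  simp [toCLMOfEquiv, Module.End.toContinuousLinearMap]

theorem Matrix.norm_toCLMOfEquiv (e : (m → 𝕜) ≃ₗ[𝕜] E) {ν : (m → 𝕜) → ℝ}
    (he : ∀ x, ‖e x‖ = ν x) (M : Matrix m m 𝕜) :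
    ‖toCLMOfEquiv e M‖ = sSup ((fun x => ν (M.mulVec x)) '' {x | ν x = 1}) := by
  have hsphere : Metric.sphere (0 : E) 1 = e '' {x | ν x = 1} := by
    ext y
    obtain ⟨x, rfl⟩ := e.surjective y
    simp [he, e.injective.eq_iff]
  rw [← ContinuousLinearMap.sSup_sphere_eq_norm, hsphere, Set.image_image]
  simp only [toCLMOfEquiv_apply_apply, he]

end

theorem Matrix.exists_algEquiv_norm_eq_sSup (ν : (m → 𝕜) → ℝ)
    (hadd : ∀ x y, ν (x + y) ≤ ν x + ν y) (hsmul : ∀ (c : 𝕜) x, ν (c • x) = ‖c‖ * ν x)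
    (hzero : ∀ x, ν x = 0 ↔ x = 0) :
    ∃ (E : Type (max v u)) (_ : NormedAddCommGroup E) (_ : NormedSpace 𝕜 E)
      (Φ : Matrix m m 𝕜 ≃ₐ[𝕜] (E →L[𝕜] E)),
      ∀ M, ‖Φ M‖ = sSup ((fun x => ν (M.mulVec x)) '' {x | ν x = 1}) := by
  obtain ⟨E, _, _, e, he⟩ := exists_linearEquiv_norm_eq ν hadd hsmul hzero
  have := e.finiteDimensional
  exact ⟨E, _, _, toCLMOfEquiv e, norm_toCLMOfEquiv e he⟩

end MatrixOperator

theorem FormalMultilinearSeries.summable_norm_mul_pow_of_ofReal_lt_radius {𝕜 : Type*}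
    [NontriviallyNormedField 𝕜] (b : ℕ → 𝕜) (l : ℕ) {r : ℝ} (hr : 0 ≤ r)
    (h : ENNReal.ofReal r < (ofScalars 𝕜 fun k => if k < l then 0 else b k).radius) :
    Summable fun k : {k : ℕ // l ≤ k} => ‖b k‖ * r ^ (k : ℕ) := by
  have := (ofScalars 𝕜 fun k => if k < l then 0 else b k).summable_norm_mul_pow h
  refine (this.subtype {k | l ≤ k}).congr fun k => ?_
  simp [Real.coe_toNNReal r hr, Nat.not_lt.2 k.2]

theorem Finset.le_sup'_rpow_inv_pow {s : Finset ℕ} (H : s.Nonempty) {a : ℕ → ℝ} {t : ℕ}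
    (ht : t ∈ s) (ht₀ : t ≠ 0) (ha : 0 ≤ a t) :
    a t ≤ (s.sup' H fun k => a k ^ (k : ℝ)⁻¹) ^ t := by
  have h := s.le_sup' (fun k => a k ^ (k : ℝ)⁻¹) ht
  have hsup : 0 ≤ s.sup' H fun k => a k ^ (k : ℝ)⁻¹ := (Real.rpow_nonneg ha _).trans h
  rwa [Real.rpow_inv_le_iff_of_pos ha hsup (by positivity), Real.rpow_natCast] at h

section PowerBounds

variable {R : Type*} [SeminormedRing R] {x : R} {α : ℝ} {p l : ℕ}

theorem norm_pow_mul_le_of_norm_pow_le (hp : ‖x ^ p‖ ≤ α ^ p) {m : ℕ} (hm : m ≠ 0) :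
    ‖x ^ (p * m)‖ ≤ α ^ (p * m) := by
  rw [pow_mul, pow_mul]
  exact (norm_pow_le' _ (Nat.pos_of_ne_zero hm)).trans (pow_le_pow_left₀ (norm_nonneg _) hp m)

theorem norm_pow_le_of_forall_mem_Ico (hp_pos : 0 < p) (hp : ‖x ^ p‖ ≤ α ^ p)
    (hwindow : ∀ t ∈ Finset.Ico l (l + p), ‖x ^ t‖ ≤ α ^ t) :
    ∀ k, l ≤ k → ‖x ^ k‖ ≤ α ^ k := by
  intro k
  induction k using Nat.strong_induction_on with
  | _ k ih =>
    intro hk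
    by_cases hkp : k < l + p
    · exact hwindow k (Finset.mem_Ico.2 ⟨hk, hkp⟩)
    · obtain ⟨j, rfl⟩ : ∃ j, k = p + j := ⟨k - p, by omega⟩
      rw [pow_add, pow_add]
      exact (norm_mul_le _ _).trans (mul_le_mul hp (ih j (by omega) (by omega))
        (norm_nonneg _) ((norm_nonneg _).trans hp))

theorem norm_pow_le_of_forall_mem_Ico_of_ne {p₀ : ℕ} (hp_pos : 0 < p) (hl_pos : 0 < l)
    (hp : ‖x ^ p‖ ≤ α ^ p) (hp₀ : p ∣ p₀)
    (hwindow : ∀ t ∈ Finset.Ico l (l + p), t ≠ p₀ → ‖x ^ t‖ ≤ α ^ t) :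
    ∀ k, l ≤ k → ‖x ^ k‖ ≤ α ^ k := by
  refine norm_pow_le_of_forall_mem_Ico hp_pos hp fun t ht => ?_
  by_cases htp₀ : t = p₀
  · obtain ⟨m, rfl⟩ := htp₀ ▸ hp₀
    refine norm_pow_mul_le_of_norm_pow_le hp ?_
    rintro rfl
    simp only [mul_zero, Finset.mem_Ico] at ht
    omega
  · exact hwindow t ht htp₀

theorem norm_tsum_smul_pow_le {𝕜 : Type*} [NormedField 𝕜] [NormedSpace 𝕜 R] {b : ℕ → 𝕜}
    (hsum : Summable fun k : {k : ℕ // l ≤ k} => ‖b k‖ * α ^ (k : ℕ))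
    (hx : ∀ k, l ≤ k → ‖x ^ k‖ ≤ α ^ k) :
    ‖∑' k : {k : ℕ // l ≤ k}, b k • x ^ (k : ℕ)‖ ≤ ∑' k : {k : ℕ // l ≤ k}, ‖b k‖ * α ^ (k : ℕ) :=
  tsum_of_norm_bounded hsum.hasSum fun k =>
    (norm_smul_le _ _).trans (mul_le_mul_of_nonneg_left (hx k k.2) (norm_nonneg _))

end PowerBounds

theorem subordinate_norm_power_series_le_general {n : ℕ}
    (ν : (Fin n → ℂ) → ℝ)
    (hν_add : ∀ x y, ν (x + y) ≤ ν x + ν y)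
    (hν_smul : ∀ (c : ℂ) (x), ν (c • x) = ‖c‖ * ν x)
    (hν_eq_zero : ∀ x, ν x = 0 ↔ x = 0)
    (N : Matrix (Fin n) (Fin n) ℂ → ℝ)
    (hN : ∀ A : Matrix (Fin n) (Fin n) ℂ,
      N A = sSup ((fun x => ν (A.mulVec x)) '' {x | ν x = 1}))
    (b : ℕ → ℂ) (l : ℕ) (R : ℝ≥0∞)
    (hR : (FormalMultilinearSeries.ofScalars ℂ
        (fun k => if k < l then 0 else b k)).radius = R)
    (A : Matrix (Fin n) (Fin n) ℂ)
    (a : ℕ → ℝ) (ha : ∀ k : ℕ, 0 < k → N (A ^ k) ≤ a k)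
    (p : ℕ) (hp1 : 1 ≤ p) (hpl : p ≤ l)
    (p₀ : ℕ) (hp₀mul : p ∣ p₀)
    (α : ℝ)
    (hα : α = (insert p ((Finset.Icc l (l + p - 1)).erase p₀)).sup'
        ⟨p, Finset.mem_insert_self p _⟩ (fun k => a k ^ ((k : ℝ)⁻¹)))
    (hαR : ENNReal.ofReal α < R) :
    N (∑' k : {k : ℕ // l ≤ k}, b (k : ℕ) • A ^ (k : ℕ)) ≤
      ∑' k : {k : ℕ // l ≤ k}, ‖b (k : ℕ)‖ * α ^ (k : ℕ) := by
  obtain ⟨E, _, _, Φ, hΦ⟩ := Matrix.exists_algEquiv_norm_eq_sSup ν hν_add hν_smul hν_eq_zero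
  have hNΦ (M : Matrix (Fin n) (Fin n) ℂ) : N M = ‖Φ M‖ := (hN M).trans (hΦ M).symm
  set S := insert p ((Finset.Icc l (l + p - 1)).erase p₀)
  have hpS : p ∈ S := Finset.mem_insert_self _ _
  have hS_pos : ∀ t ∈ S, 0 < t := by
    simp only [S, Finset.mem_insert, Finset.mem_erase, Finset.mem_Icc]
    omega
  have ha_nonneg : ∀ t ∈ S, 0 ≤ a t := fun t ht =>
    (norm_nonneg _).trans ((hNΦ _).symm.trans_le (ha t (hS_pos t ht)))
  have hS : ∀ t ∈ S, ‖Φ A ^ t‖ ≤ α ^ t := fun t ht => by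
    rw [← map_pow, ← hNΦ, hα]
    exact (ha t (hS_pos t ht)).trans
      (Finset.le_sup'_rpow_inv_pow _ ht (hS_pos t ht).ne' (ha_nonneg t ht))
  have hpow : ∀ k, l ≤ k → ‖Φ A ^ k‖ ≤ α ^ k :=
    norm_pow_le_of_forall_mem_Ico_of_ne hp1 (by omega) (hS p hpS) hp₀mul
      fun t ht htp₀ => hS t <| Finset.mem_insert_of_mem <| Finset.mem_erase.2
        ⟨htp₀, Finset.mem_Icc.2 (by rw [Finset.mem_Ico] at ht; omega)⟩
  have hα_nonneg : 0 ≤ α := hα ▸ (Real.rpow_nonneg (ha_nonneg p hpS) _).trans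
    (Finset.le_sup' (fun k => a k ^ ((k : ℝ)⁻¹)) hpS)
  rw [hNΦ, map_tsum_of_finiteDimensional Φ]
  simp only [map_smul, map_pow]
  exact norm_tsum_smul_pow_le
    (FormalMultilinearSeries.summable_norm_mul_pow_of_ofReal_lt_radius b l hα_nonneg (hR ▸ hαR))
    hpow

/-- Theorem 1 of the paper.  Let `h_l(x) = ∑_{k ≥ l} b_k x^k` be a complex
power series with radius of convergence `R`, and `h̃_l(x) = ∑_{k ≥ l} ‖b_k‖ x^k`.  Let `A` be
an `n×n` complex matrix with spectral radius `ρ(A) < R`, and let `N` be a subordinate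
(operator) matrix norm, i.e. the norm induced by a vector norm `ν` on `ℂⁿ`:
`N A = sup { ν (A x) : ν x = 1 }`.  Suppose `N (A^k) ≤ a k` for every `k ≥ 1`.  Let
`1 ≤ p ≤ l`, let `p₀` be the multiple of `p` with `l ≤ p₀ ≤ l + p - 1`, and set
`α_p = max { (a k)^{1/k} : k = p, l, l+1, …, p₀-1, p₀+1, …, l+p-1 }`.
If `α_p < R` then `N (h_l(A)) ≤ h̃_l(α_p)`, i.e.
`N (∑_{k ≥ l} b_k A^k) ≤ ∑_{k ≥ l} ‖b_k‖ α_p^k`. -/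
theorem subordinate_norm_power_series_le {n : ℕ}
    (ν : (Fin n → ℂ) → ℝ)
    (hν_add : ∀ x y, ν (x + y) ≤ ν x + ν y)
    (hν_smul : ∀ (c : ℂ) (x), ν (c • x) = ‖c‖ * ν x)
    (hν_eq_zero : ∀ x, ν x = 0 ↔ x = 0)
    (N : Matrix (Fin n) (Fin n) ℂ → ℝ)
    (hN : ∀ A : Matrix (Fin n) (Fin n) ℂ,
      N A = sSup ((fun x => ν (A.mulVec x)) '' {x | ν x = 1}))
    (b : ℕ → ℂ) (l : ℕ) (R : ℝ≥0∞)
    (hR : (FormalMultilinearSeries.ofScalars ℂ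
        (fun k => if k < l then 0 else b k)).radius = R)
    (A : Matrix (Fin n) (Fin n) ℂ)
    (hρ : spectralRadius ℂ A < R)
    (a : ℕ → ℝ) (ha : ∀ k : ℕ, 0 < k → N (A ^ k) ≤ a k)
    (p : ℕ) (hp1 : 1 ≤ p) (hpl : p ≤ l)
    (p₀ : ℕ) (hp₀mul : p ∣ p₀) (hp₀l : l ≤ p₀) (hp₀u : p₀ ≤ l + p - 1)
    (α : ℝ)
    (hα : α = (insert p ((Finset.Icc l (l + p - 1)).erase p₀)).sup'
        ⟨p, Finset.mem_insert_self p _⟩ (fun k => a k ^ ((k : ℝ)⁻¹)))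
    (hαR : ENNReal.ofReal α < R) :
    N (∑' k : {k : ℕ // l ≤ k}, b (k : ℕ) • A ^ (k : ℕ)) ≤
      ∑' k : {k : ℕ // l ≤ k}, ‖b (k : ℕ)‖ * α ^ (k : ℕ) :=
  subordinate_norm_power_series_le_general ν hν_add hν_smul hν_eq_zero N hN b l R hR A a ha p hp1
    hpl p₀ hp₀mul α hα hαR
end

section
/- Let A be an n-by-n complex matrix and let m be a positive integer. Suppose that for each positive integer k there exists a real number a_k with \|A^k\|_1 \le a_k. Let p be a positive integer with 1 \le p \le m+1, let p_0 be a multiple of p satisfying m+1 \le p_0 \le m+1+p, and define \alpha_p = max{ a_k^{1/k} : k = p, m+1, m+2, \ldots, p_0 - 1, p_0 + 1, p_0 + 2, \ldots, m+1+p }. If 0 < \alpha_p < m+2, then the Taylor remainder R_m(A) = e^A - \sum_{k=0}^{m} A^k/k! = \sum_{k=m+1}^{\infty} A^k/k! satisfies the strict bound \|R_m(A)\|_1 < (\alpha_p^{m+1}/(m+1)!) \cdot 1/(1 - \alpha_p/(m+2)). -/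
/-!
Submultiplicativity of the norm propagates the bounds `‖A ^ k‖ ≤ α ^ k` from the window
`k = m + 1, …, m + p` to every `k ≥ m + 1`, by splitting off factors `A ^ p`; the one exponent
`p₀` missing from the window is covered by `‖A ^ p₀‖ ≤ ‖A ^ p‖ ^ (p₀ / p)`. The remainder is then
dominated termwise by the geometric series `α ^ (m+1) / (m+1)! * (α / (m+2)) ^ i`, because
`(m+1+i)! ≥ (m+1)! (m+2) ^ i`, with strict inequality from `i = 2` on.
The matrix 1-norm is the ∞-operator norm of the transpose, a submultiplicative algebra norm.
-/

/-- The matrix 1-norm of a complex square matrix: the operator norm induced by the vector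
1-norm, i.e. the maximum absolute column sum `max_j ∑_i ‖A i j‖`. -/
noncomputable def matrixOneNorm {n : ℕ} (A : Matrix (Fin n) (Fin n) ℂ) : ℝ :=
  ⨆ j, ∑ i, ‖A i j‖

open Matrix NormedSpace Finset
open scoped Nat

section PowerBounds

variable {R : Type*} [SeminormedRing R] {x : R} {α : ℝ}

theorem norm_pow_le_pow_of_dvd {p q : ℕ} (hxp : ‖x ^ p‖ ≤ α ^ p) (hpq : p ∣ q) (hq : 0 < q) :
    ‖x ^ q‖ ≤ α ^ q := by
  obtain ⟨c, rfl⟩ := hpq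
  calc ‖x ^ (p * c)‖ = ‖(x ^ p) ^ c‖ := by rw [pow_mul]
    _ ≤ ‖x ^ p‖ ^ c := norm_pow_le' _ (Nat.pos_of_mul_pos_left hq)
    _ ≤ (α ^ p) ^ c := pow_le_pow_left₀ (norm_nonneg _) hxp c
    _ = α ^ (p * c) := (pow_mul α p c).symm

theorem norm_pow_le_pow_of_le_on_Ico {p N : ℕ} (hp : 0 < p) (hα : 0 ≤ α)
    (hxp : ‖x ^ p‖ ≤ α ^ p) (hIco : ∀ k ∈ Ico N (N + p), ‖x ^ k‖ ≤ α ^ k) :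
    ∀ k, N ≤ k → ‖x ^ k‖ ≤ α ^ k := by
  intro k
  induction k using Nat.strong_induction_on with
  | _ k ih =>
    intro hNk
    by_cases hk : k < N + p
    · exact hIco k (mem_Ico.2 ⟨hNk, hk⟩)
    · calc ‖x ^ k‖ = ‖x ^ (k - p) * x ^ p‖ := by rw [← pow_add, Nat.sub_add_cancel (by omega)]
        _ ≤ ‖x ^ (k - p)‖ * ‖x ^ p‖ := norm_mul_le _ _
        _ ≤ α ^ (k - p) * α ^ p :=
          mul_le_mul (ih _ (by omega) (by omega)) hxp (norm_nonneg _) (pow_nonneg hα _)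
        _ = α ^ k := by rw [← pow_add, Nat.sub_add_cancel (by omega)]

end PowerBounds

section RealTail

theorem Nat.factorial_mul_succ_sq_lt_factorial_add_two (N : ℕ) : N ! * (N + 1) ^ 2 < (N + 2)! := by
  rw [Nat.factorial_succ, Nat.factorial_succ, sq]
  nlinarith [Nat.factorial_pos N]

variable {α : ℝ}

theorem pow_div_factorial_mul_div_pow (N i : ℕ) :
    α ^ N / N ! * (α / (N + 1)) ^ i = α ^ (i + N) / (N ! * (N + 1 : ℝ) ^ i) := by
  rw [div_pow, div_mul_div_comm, pow_add, mul_comm (α ^ i)]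

theorem pow_add_div_factorial_le (hα : 0 ≤ α) (N i : ℕ) :
    α ^ (i + N) / (i + N)! ≤ α ^ N / N ! * (α / (N + 1)) ^ i := by
  rw [pow_div_factorial_mul_div_pow, add_comm i]
  gcongr
  exact_mod_cast Nat.factorial_mul_pow_le_factorial

theorem pow_two_add_div_factorial_lt (hα : 0 < α) (N : ℕ) :
    α ^ (2 + N) / (2 + N)! < α ^ N / N ! * (α / (N + 1)) ^ 2 := by
  rw [pow_div_factorial_mul_div_pow, add_comm 2]
  gcongr
  exact_mod_cast Nat.factorial_mul_succ_sq_lt_factorial_add_two N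

theorem tsum_pow_add_div_factorial_lt (hα : 0 < α) {N : ℕ} (hαN : α < N + 1) :
    ∑' i, α ^ (i + N) / (i + N)! < α ^ N / N ! * (1 / (1 - α / (N + 1))) := by
  set r := α / (N + 1)
  have hr0 : 0 ≤ r := by positivity
  have hr1 : r < 1 := (div_lt_one (by positivity)).2 hαN
  calc ∑' i, α ^ (i + N) / (i + N)! < ∑' i, α ^ N / N ! * r ^ i :=
        Summable.tsum_lt_tsum_of_nonneg (fun i => by positivity)
          (pow_add_div_factorial_le hα.le N) (pow_two_add_div_factorial_lt hα N)
          ((summable_geometric_of_lt_one hr0 hr1).mul_left _)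
    _ = α ^ N / N ! * (1 / (1 - r)) := by
        rw [tsum_mul_left, tsum_geometric_of_lt_one hr0 hr1, one_div]

end RealTail

section ExpTail

variable {𝕂 𝔸 : Type*} [RCLike 𝕂] [NormedRing 𝔸] [NormedAlgebra 𝕂 𝔸] [CompleteSpace 𝔸]

theorem exp_sub_sum_range_eq_tsum (x : 𝔸) (N : ℕ) :
    exp x - ∑ k ∈ range N, (k !⁻¹ : 𝕂) • x ^ k = ∑' i, ((i + N)!⁻¹ : 𝕂) • x ^ (i + N) := by
  rw [congrFun (exp_eq_tsum 𝕂) x, ← (expSeries_summable' (𝕂 := 𝕂) x).sum_add_tsum_nat_add N,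
    add_sub_cancel_left]

theorem norm_exp_sub_sum_range_lt {x : 𝔸} {α : ℝ} {N : ℕ} (hα : 0 < α) (hαN : α < N + 1)
    (hx : ∀ k, N ≤ k → ‖x ^ k‖ ≤ α ^ k) :
    ‖exp x - ∑ k ∈ range N, (k !⁻¹ : 𝕂) • x ^ k‖ < α ^ N / N ! * (1 / (1 - α / (N + 1))) := by
  have hterm : ∀ i, ‖((i + N)!⁻¹ : 𝕂) • x ^ (i + N)‖ ≤ α ^ (i + N) / (i + N)! := by
    intro i
    rw [norm_smul, norm_inv, RCLike.norm_natCast, inv_mul_eq_div]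
    gcongr
    exact hx _ (Nat.le_add_left N i)
  have hsum : Summable fun i => α ^ (i + N) / (i + N)! :=
    (summable_nat_add_iff N).2 (Real.summable_pow_div_factorial α)
  rw [exp_sub_sum_range_eq_tsum]
  exact (tsum_of_norm_bounded hsum.hasSum hterm).trans_lt (tsum_pow_add_div_factorial_lt hα hαN)

end ExpTail

attribute [local instance] Matrix.linftyOpNormedAddCommGroup Matrix.linftyOpNormedRing
  Matrix.linftyOpNormedAlgebra

theorem matrixOneNorm_eq_norm_transpose {n : ℕ} (M : Matrix (Fin n) (Fin n) ℂ) :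
    matrixOneNorm M = ‖Mᵀ‖ := by
  rw [matrixOneNorm, linfty_opNorm_def, sup_univ_eq_ciSup, NNReal.coe_iSup]
  simp only [NNReal.coe_sum, coe_nnnorm, transpose_apply]

theorem matrix_exp_taylor_remainder_oneNorm_lt_general {n : ℕ} (A : Matrix (Fin n) (Fin n) ℂ)
    (m : ℕ) (a : ℕ → ℝ) (ha : ∀ k : ℕ, 0 < k → matrixOneNorm (A ^ k) ≤ a k)
    (p : ℕ) (hp1 : 1 ≤ p)
    (p₀ : ℕ) (hp₀mul : p ∣ p₀)
    (α : ℝ)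
    (hα : α = (insert p ((Finset.Icc (m + 1) (m + 1 + p)).erase p₀)).sup'
        ⟨p, Finset.mem_insert_self p _⟩ (fun k => a k ^ ((k : ℝ)⁻¹)))
    (hα0 : 0 < α) (hαlt : α < m + 2) :
    matrixOneNorm (NormedSpace.exp A -
        ∑ k ∈ Finset.range (m + 1), (Nat.factorial k : ℂ)⁻¹ • A ^ k) <
      α ^ (m + 1) / (Nat.factorial (m + 1) : ℝ) * (1 / (1 - α / (m + 2))) := by
  have hS : ∀ k ∈ insert p ((Icc (m + 1) (m + 1 + p)).erase p₀), ‖Aᵀ ^ k‖ ≤ α ^ k := by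
    intro k hk
    have hk0 : 0 < k := by
      rcases mem_insert.1 hk with rfl | hk
      · exact hp1
      · have := (mem_Icc.1 (mem_of_mem_erase hk)).1
        omega
    have hAk : ‖Aᵀ ^ k‖ ≤ a k := by
      rw [← transpose_pow, ← matrixOneNorm_eq_norm_transpose]
      exact ha k hk0
    have hak : a k ^ (k : ℝ)⁻¹ ≤ α := hα ▸ le_sup' (fun k => a k ^ (k : ℝ)⁻¹) hk
    rw [Real.rpow_inv_le_iff_of_pos ((norm_nonneg _).trans hAk) hα0.le (by positivity),
      Real.rpow_natCast] at hak
    exact hAk.trans hak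
  have hp : ‖Aᵀ ^ p‖ ≤ α ^ p := hS p (mem_insert_self _ _)
  have htail : ∀ k, m + 1 ≤ k → ‖Aᵀ ^ k‖ ≤ α ^ k := by
    refine norm_pow_le_pow_of_le_on_Ico hp1 hα0.le hp fun k hk => ?_
    obtain ⟨hmk, hkp⟩ := mem_Ico.1 hk
    obtain rfl | hkp₀ := eq_or_ne k p₀
    · exact norm_pow_le_pow_of_dvd hp hp₀mul (by omega)
    · exact hS k (mem_insert_of_mem (mem_erase.2 ⟨hkp₀, mem_Icc.2 ⟨hmk, by omega⟩⟩))
  have hαN : α < ((m + 1 : ℕ) : ℝ) + 1 := by push_cast; linarith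
  calc matrixOneNorm (exp A - ∑ k ∈ range (m + 1), (k ! : ℂ)⁻¹ • A ^ k)
      = ‖exp Aᵀ - ∑ k ∈ range (m + 1), (k ! : ℂ)⁻¹ • Aᵀ ^ k‖ := by
        simp only [matrixOneNorm_eq_norm_transpose, transpose_sub, transpose_sum, transpose_smul,
          transpose_pow, exp_transpose]
    _ < α ^ (m + 1) / (m + 1)! * (1 / (1 - α / ((m + 1 : ℕ) + 1))) :=
        norm_exp_sub_sum_range_lt hα0 hαN htail
    _ = α ^ (m + 1) / (m + 1)! * (1 / (1 - α / (m + 2))) := by push_cast; ring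

/-- Theorem 2 of the paper.  Let `A` be an `n×n` complex matrix and `m ≥ 1`.
Suppose `‖A^k‖₁ ≤ a k` for every `k ≥ 1`.  Let `1 ≤ p ≤ m+1`, let `p₀` be a multiple of `p`
with `m+1 ≤ p₀ ≤ m+1+p`, and let
`α_p = max { (a k)^{1/k} : k = p, m+1, m+2, …, p₀-1, p₀+1, …, m+1+p }`.
If `0 < α_p < m+2`, then the Taylor remainder `R_m(A) = e^A - ∑_{k=0}^m A^k/k!` satisfies
`‖R_m(A)‖₁ < (α_p^{m+1}/(m+1)!) · 1/(1 - α_p/(m+2))`. -/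
theorem matrix_exp_taylor_remainder_oneNorm_lt {n : ℕ} (A : Matrix (Fin n) (Fin n) ℂ)
    (m : ℕ) (hm : 0 < m) (a : ℕ → ℝ) (ha : ∀ k : ℕ, 0 < k → matrixOneNorm (A ^ k) ≤ a k)
    (p : ℕ) (hp1 : 1 ≤ p) (hpm : p ≤ m + 1)
    (p₀ : ℕ) (hp₀mul : p ∣ p₀) (hp₀l : m + 1 ≤ p₀) (hp₀u : p₀ ≤ m + 1 + p)
    (α : ℝ)
    (hα : α = (insert p ((Finset.Icc (m + 1) (m + 1 + p)).erase p₀)).sup'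
        ⟨p, Finset.mem_insert_self p _⟩ (fun k => a k ^ ((k : ℝ)⁻¹)))
    (hα0 : 0 < α) (hαlt : α < m + 2) :
    matrixOneNorm (NormedSpace.exp A -
        ∑ k ∈ Finset.range (m + 1), (Nat.factorial k : ℂ)⁻¹ • A ^ k) <
      α ^ (m + 1) / (Nat.factorial (m + 1) : ℝ) * (1 / (1 - α / (m + 2))) :=
  matrix_exp_taylor_remainder_oneNorm_lt_general A m a ha p hp1 p₀ hp₀mul α hα hα0 hαlt
end

section
/- Let A_1 be an n-by-t real matrix and A_2 a t-by-n real matrix, and set W = A_1 A_2 (an n-by-n matrix) and V = A_2 A_1 (a t-by-t matrix). Then the matrix exponential of W satisfies the exact identity e^W = I_n + A_1 \left( \sum_{i=0}^{\infty} V^i/(i+1)! \right) A_2, where I_n is the n-by-n identity matrix and the series \sum_{i=0}^{\infty} V^i/(i+1)! converges absolutely. -/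
/-!
Since `(A₁ A₂)^(i+1) = A₁ (A₂ A₁)^i A₂`, every term of the exponential series of `A₁ A₂` past
the constant one factors through `A₁ · A₂`, and `M ↦ A₁ M A₂` is continuous and additive, so it
commutes with the infinite sum. The remaining series `∑ (A₂ A₁)^i / (i+1)!` is dominated termwise
by the exponential series of `A₂ A₁`; absolute convergence does not depend on the chosen norm
because the space of matrices is finite-dimensional.
-/

attribute [local instance] Matrix.normedAddCommGroup

attribute [local instance] Matrix.normedSpace

open NormedSpace Nat

theorem HasSum.matrix_mul_mul {ι l m n R : Type*} [Fintype l] [Fintype m]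
    [NonUnitalNonAssocSemiring R] [TopologicalSpace R] [IsTopologicalSemiring R]
    {f : ι → Matrix l m R} {a : Matrix l m R} (hf : HasSum f a)
    (A : Matrix n l R) (B : Matrix m n R) : HasSum (fun i => A * f i * B) (A * a * B) :=
  (hf.map (Matrix.addMonoidHomMulLeft A) (continuous_const.matrix_mul continuous_id)).map
    (Matrix.addMonoidHomMulRight B) (continuous_id.matrix_mul continuous_const)

theorem summable_norm_smul_pow_of_norm_le_inv_factorial {𝕂 𝔸 : Type*} [RCLike 𝕂] [NormedRing 𝔸]
    [NormedAlgebra 𝕂 𝔸] {c : ℕ → 𝕂} (hc : ∀ i, ‖c i‖ ≤ (i ! : ℝ)⁻¹) (x : 𝔸) :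
    Summable fun i => ‖c i • x ^ i‖ := by
  refine (norm_expSeries_summable' (𝕂 := 𝕂) x).of_nonneg_of_le (fun _ => norm_nonneg _)
    fun i => ?_
  rw [norm_smul, norm_smul, norm_inv, RCLike.norm_natCast]
  gcongr
  exact hc i

theorem norm_inv_factorial_succ_le {𝕂 : Type*} [RCLike 𝕂] (i : ℕ) :
    ‖((i + 1)! : 𝕂)⁻¹‖ ≤ (i ! : ℝ)⁻¹ := by
  rw [norm_inv, RCLike.norm_natCast]
  gcongr
  exact i.le_succ

namespace Matrix

variable {m k R 𝕂 : Type*} [Fintype m] [DecidableEq m] [Fintype k] [DecidableEq k]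

theorem mul_pow_succ_eq_mul_mul_pow_mul [Semiring R] (A : Matrix m k R) (B : Matrix k m R)
    (i : ℕ) :
    (A * B) ^ (i + 1) = A * (B * A) ^ i * B := by
  induction i with
  | zero => simp
  | succ i ih => rw [pow_succ, ih, pow_succ]; simp only [Matrix.mul_assoc]

variable [RCLike 𝕂]

/-- Summability is transported from the operator norm of `toEuclideanCLM M`, since the
entrywise norm on matrices is not submultiplicative. -/
theorem summable_smul_pow_of_norm_le_inv_factorial {c : ℕ → 𝕂}
    (hc : ∀ i, ‖c i‖ ≤ (i ! : ℝ)⁻¹) (M : Matrix m m 𝕂) : Summable fun i => c i • M ^ i := by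
  let e := (toEuclideanCLM (n := m) (𝕜 := 𝕂)).toAlgEquiv.toLinearEquiv.toContinuousLinearEquiv
  rw [← e.summable]
  simpa [e] using
    (summable_norm_smul_pow_of_norm_le_inv_factorial hc (toEuclideanCLM (𝕜 := 𝕂) M)).of_norm

theorem exp_mul_eq_one_add_mul_tsum_mul (A : Matrix m k 𝕂) (B : Matrix k m 𝕂) :
    exp (A * B) = 1 + A * (∑' i, ((i + 1)! : 𝕂)⁻¹ • (B * A) ^ i) * B := by
  have hexp : HasSum (fun i => (i ! : 𝕂)⁻¹ • (A * B) ^ i) (exp (A * B)) := by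
    rw [exp_eq_tsum 𝕂]
    exact (summable_smul_pow_of_norm_le_inv_factorial (fun i => by simp) _).hasSum
  have hfactor := (summable_smul_pow_of_norm_le_inv_factorial norm_inv_factorial_succ_le
    (B * A)).hasSum.matrix_mul_mul A B
  simp only [Matrix.mul_smul, Matrix.smul_mul, ← mul_pow_succ_eq_mul_mul_pow_mul] at hfactor
  have htail := (hasSum_nat_add_iff' 1).mpr hexp
  simp only [Finset.range_one, Finset.sum_singleton, factorial_zero, cast_one, inv_one, pow_zero,
    one_smul] at htail
  rw [← htail.unique hfactor, add_sub_cancel]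

end Matrix

/-- For an `n×t` real matrix `A₁` and a `t×n` real matrix `A₂`, setting
`W = A₁A₂` and `V = A₂A₁`, the matrix exponential satisfies the exact identity
`e^W = Iₙ + A₁ (∑_{i=0}^∞ V^i/(i+1)!) A₂`, and the series `∑_{i=0}^∞ V^i/(i+1)!`
converges absolutely. -/
theorem exp_lowRank_factorization {n t : ℕ}
    (A₁ : Matrix (Fin n) (Fin t) ℝ) (A₂ : Matrix (Fin t) (Fin n) ℝ) :
    NormedSpace.exp (A₁ * A₂) =
        1 + A₁ * (∑' i : ℕ, (Nat.factorial (i + 1) : ℝ)⁻¹ • (A₂ * A₁) ^ i) * A₂ ∧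
      Summable fun i : ℕ => ‖(Nat.factorial (i + 1) : ℝ)⁻¹ • (A₂ * A₁) ^ i‖ :=
  ⟨Matrix.exp_mul_eq_one_add_mul_tsum_mul A₁ A₂, summable_norm_iff.mpr
    (Matrix.summable_smul_pow_of_norm_le_inv_factorial norm_inv_factorial_succ_le (A₂ * A₁))⟩
end
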